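/- arXiv:1501.03774 — 3 statements merged into one kernel-verified Lean document; each statement's English description precedes it below -/
import Mathlib

section
/- Let C be a cycle consisting of simple edges in a graph G, and let T be a collection of graphic open 5-capacities (subsets of ℝ/5ℤ) such that the amplitude of the union ⋃_{A∈T} A is at most 3. Let G' be the capacitated graph obtained from G by assigning to each edge of C some capacity A ∈ T (not necessarily the same for all edges) and capacity (1,4) to every other edge. If φ_c(G) ≥ 5, then G' admits no sub-5-MCNZF; consequently, any graph G'' obtained from G by replacing each edge of C by an A-edge with A ∈ T satisfies φ_c(G'') ≥ 5. -/
open Finset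


open Finset

/-- A finite multigraph given with a reference orientation: each edge `e` goes
from `src e` to `tgt e`.  An orientation of the graph is a sign function
`σ : E → ℤˣ` telling, for each edge, whether it keeps (`1`) or reverses (`-1`)
its reference direction. -/
structure Multigraph where
  V : Type
  E : Type
  [fintV : Fintype V]
  [fintE : Fintype E]
  [decV : DecidableEq V]
  [decE : DecidableEq E]
  src : E → V
  tgt : E → V

attribute [instance] Multigraph.fintV Multigraph.fintE Multigraph.decV Multigraph.decE

/-- `f` is a flow with respect to the reference orientation: at every vertex the
sum over outgoing edges equals the sum over incoming edges. -/
def Multigraph.IsFlow (G : Multigraph) {M : Type*} [AddCommMonoid M] (f : G.E → M) : Prop :=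
  ∀ v : G.V,
    ∑ e ∈ Finset.univ.filter (fun e => G.src e = v), f e =
    ∑ e ∈ Finset.univ.filter (fun e => G.tgt e = v), f e

/-- `f` is a flow on the orientation `σ` of `G` (values of `f` are read in the
direction given by `σ`). -/
def Multigraph.IsFlowOn (G : Multigraph) {M : Type*} [AddCommGroup M]
    (σ : G.E → ℤˣ) (f : G.E → M) : Prop :=
  G.IsFlow (fun e => ((σ e : ℤ) • f e))

/-- The open interval `(a,b)` of `ℝ/rℤ`: the points traversed strictly clockwise
from `a` to `b`, with the convention `(a,a) = ℝ/rℤ \ {a}`. -/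
noncomputable def openArc (r a b : ℝ) : Set (AddCircle r) :=
  (fun t : ℝ => (t : AddCircle r)) '' Set.Ioo a (a + (r - Int.fract ((a - b) / r) * r))

/-- The closed interval `[a,b]` of `ℝ/rℤ`: the points traversed clockwise from
`a` to `b`, endpoints included, with the convention `[a,a] = {a}`. -/
noncomputable def closedArc (r a b : ℝ) : Set (AddCircle r) :=
  (fun t : ℝ => (t : AddCircle r)) '' Set.Icc a (a + Int.fract ((b - a) / r) * r)

/-- `G` has a circular nowhere-zero `r`-flow: an orientation together with a
real-valued flow all of whose values lie in `[1, r-1]`. -/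
def Multigraph.HasCNZF (G : Multigraph) (r : ℝ) : Prop :=
  ∃ (σ : G.E → ℤˣ) (f : G.E → ℝ), G.IsFlowOn σ f ∧ ∀ e, f e ∈ Set.Icc (1:ℝ) (r - 1)

/-- The circular flow number of `G`, as an extended real (`⊤` if `G` admits no
circular nowhere-zero `r`-flow for any `r`, e.g. if `G` has a bridge). -/
noncomputable def circFlowNumber (G : Multigraph) : EReal :=
  sInf {x : EReal | ∃ r : ℝ, x = (r : EReal) ∧ G.HasCNZF r}

/-- The graph `G ∪ e₀` obtained from `G` by adding one extra edge `e₀ = none`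
joining `u` to `v`. -/
def Multigraph.addEdge (G : Multigraph) (u v : G.V) : Multigraph where
  V := G.V
  E := Option G.E
  src := fun e => e.elim u G.src
  tgt := fun e => e.elim v G.tgt

/-- The capacity of the capacitated g-edge `(G, cap)` with terminals `u,v`:
all values `f e₀` of modular flows `f` on `G ∪ e₀` (over all orientations) whose
value on each edge `e` of `G` lies in the prescribed set `cap e`. -/
def CPcap (r : ℝ) (G : Multigraph) (cap : G.E → Set (AddCircle r)) (u v : G.V) :
    Set (AddCircle r) :=
  {t | ∃ (σ : Option G.E → ℤˣ) (f : Option G.E → AddCircle r),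
        (G.addEdge u v).IsFlowOn σ f ∧ (∀ e : G.E, f (some e) ∈ cap e) ∧ f none = t}

/-- The open `r`-capacity `CP_r(G_{u,v})` of the g-edge `G_{u,v}`. -/
noncomputable def CP (r : ℝ) (G : Multigraph) (u v : G.V) : Set (AddCircle r) :=
  CPcap r G (fun _ => openArc r 1 (r - 1)) u v

/-- A capacitated graph `(G, cap)` admits a flow respecting all capacities
(for `cap e = (1,4) ⊆ ℝ/5ℤ` everywhere this is a sub-5-MCNZF). -/
def HasCapFlow (r : ℝ) (G : Multigraph) (cap : G.E → Set (AddCircle r)) : Prop :=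
  ∃ (σ : G.E → ℤˣ) (f : G.E → AddCircle r), G.IsFlowOn σ f ∧ ∀ e, f e ∈ cap e

/-- Deletion of the edge `e₀`. -/
def Multigraph.deleteEdge (G : Multigraph) (e₀ : G.E) : Multigraph where
  V := G.V
  E := {e : G.E // e ≠ e₀}
  src := fun e => G.src e.1
  tgt := fun e => G.tgt e.1

/-- Degree of a vertex (loops count twice). -/
def Multigraph.degree (G : Multigraph) (v : G.V) : ℕ :=
  (Finset.univ.filter (fun e => G.src e = v)).card +
  (Finset.univ.filter (fun e => G.tgt e = v)).card

/-- The tail of edge `e` in the orientation `σ`. -/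
def Multigraph.osrc (G : Multigraph) (σ : G.E → ℤˣ) (e : G.E) : G.V :=
  if σ e = 1 then G.src e else G.tgt e

/-- The head of edge `e` in the orientation `σ`. -/
def Multigraph.otgt (G : Multigraph) (σ : G.E → ℤˣ) (e : G.E) : G.V :=
  if σ e = 1 then G.tgt e else G.src e

/-- Vertex embedding for edge replacement. -/
def erEmbed (G : Multigraph) (H : G.E → Multigraph) (a b : ∀ e, (H e).V) (e : G.E)
    (x : (H e).V) : G.V ⊕ Σ e : G.E, {x : (H e).V // x ≠ a e ∧ x ≠ b e} :=
  if h1 : x = a e then Sum.inl (G.src e)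
  else if h2 : x = b e then Sum.inl (G.tgt e)
  else Sum.inr ⟨e, x, h1, h2⟩

/-- The graph obtained from `G` by replacing each edge `e` by the g-edge
`(H e)_{a e, b e}`, the terminal `a e` being glued onto `G.src e` and `b e`
onto `G.tgt e`. -/
def edgeReplace (G : Multigraph) (H : G.E → Multigraph) (a b : ∀ e, (H e).V) : Multigraph where
  V := G.V ⊕ Σ e : G.E, {x : (H e).V // x ≠ a e ∧ x ≠ b e}
  E := Σ e : G.E, (H e).E
  src := fun ee => erEmbed G H a b ee.1 ((H ee.1).src ee.2)
  tgt := fun ee => erEmbed G H a b ee.1 ((H ee.1).tgt ee.2)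

/-- `A` is a graphic subset of `ℝ/kℤ`: it is the open `k`-capacity of some
g-edge. -/
def Graphic (k : ℝ) (A : Set (AddCircle k)) : Prop :=
  ∃ (G : Multigraph) (u v : G.V), u ≠ v ∧ CP k G u v = A


/-!
Push the constant `1 - z` once around the cycle. Capacities of g-edges are symmetric under
`x ↦ -x`, so each capacity in `T`, lying in `(z, z + 3)`, is moved into `(1, 4)` whichever way
the cycle traverses the edge; a capacitated flow on `G` would thus become a `5`-modular flow
with all values in `(1, 4)`. Such a flow lifts to a real flow with absolute values in `(1, 4)`:
among all choices of one of the two real representatives in `(-5, 5)` on each edge, take one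
minimising the total imbalance at the vertices; if some vertex had positive imbalance, it would
reach a vertex of negative imbalance along edges carrying positive flow, and flipping the
representatives along such a path would lower the imbalance. The real flow is a circular
`r`-flow with `r < 5`, contradicting `φ_c(G) ≥ 5`.

For `G''`, a circular `r`-flow with `r < 5` rescales to a `5`-modular flow with values in
`(1, 4)`; on each inserted g-edge it is conserved at the inner vertices, so the value it passes
between the terminals lies in the capacity of that g-edge, and these values form a capacitated
flow on `G`.
-/

namespace Multigraph

variable (G : Multigraph) {M N : Type*} [AddCommGroup M] [AddCommGroup N]

def netOut : (G.E → M) →+ (G.V → M) :=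
  AddMonoidHom.mk'
    (fun w v => ∑ e ∈ univ.filter (G.src · = v), w e - ∑ e ∈ univ.filter (G.tgt · = v), w e)
    (fun w w' => by ext v; simp only [Pi.add_apply, sum_add_distrib]; abel)

variable {G}

lemma netOut_apply (w : G.E → M) (v : G.V) :
    G.netOut w v =
      ∑ e ∈ univ.filter (G.src · = v), w e - ∑ e ∈ univ.filter (G.tgt · = v), w e :=
  rfl

lemma netOut_apply_eq_sum_ite (w : G.E → M) (v : G.V) :
    G.netOut w v = ∑ e, ((if G.src e = v then w e else 0) - if G.tgt e = v then w e else 0) := by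
  rw [netOut_apply, sum_filter, sum_filter, sum_sub_distrib]

lemma isFlow_iff_netOut_eq_zero {w : G.E → M} : G.IsFlow w ↔ ∀ v, G.netOut w v = 0 := by
  simp only [netOut_apply, sub_eq_zero, IsFlow]

lemma netOut_map (φ : M →+ N) (w : G.E → M) (v : G.V) :
    G.netOut (fun e => φ (w e)) v = φ (G.netOut w v) := by
  simp only [netOut_apply, map_sub, map_sum]

lemma IsFlow.map {w : G.E → M} (hw : G.IsFlow w) (φ : M →+ N) : G.IsFlow (fun e => φ (w e)) := by
  rw [isFlow_iff_netOut_eq_zero] at hw ⊢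
  intro v
  rw [netOut_map, hw, map_zero]

lemma IsFlow.add {w w' : G.E → M} (hw : G.IsFlow w) (hw' : G.IsFlow w') : G.IsFlow (w + w') := by
  rw [isFlow_iff_netOut_eq_zero] at hw hw' ⊢
  intro v
  rw [map_add, Pi.add_apply, hw, hw', add_zero]

lemma netOut_single (e : G.E) (c : M) (v : G.V) :
    G.netOut (Pi.single e c) v = (if G.src e = v then c else 0) - if G.tgt e = v then c else 0 := by
  rw [netOut_apply_eq_sum_ite, Fintype.sum_eq_single e]
  · simp
  · intro e' he'
    simp [he']

lemma sum_netOut_eq_sum_ite (w : G.E → M) (S : Finset G.V) :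
    ∑ v ∈ S, G.netOut w v =
      ∑ e, ((if G.src e ∈ S then w e else 0) - if G.tgt e ∈ S then w e else 0) := by
  simp_rw [netOut_apply_eq_sum_ite, sum_sub_distrib]
  rw [sum_comm, sum_comm (s := S)]
  simp [sum_ite_eq]

lemma sum_netOut (w : G.E → M) : ∑ v, G.netOut w v = 0 := by
  simp [sum_netOut_eq_sum_ite]

lemma sum_netOut_fiber {W : Type*} [DecidableEq W] (φ : G.V → W) (w : G.E → M)
    (y : W) : ∑ x ∈ univ.filter (φ · = y), G.netOut w x =
      ∑ e, ((if φ (G.src e) = y then w e else 0) - if φ (G.tgt e) = y then w e else 0) := by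
  simp [sum_netOut_eq_sum_ite]

lemma netOut_add_netOut_eq_zero {w : G.E → M} {u v : G.V} (huv : u ≠ v)
    (hw : ∀ x, x ≠ u → x ≠ v → G.netOut w x = 0) : G.netOut w u + G.netOut w v = 0 := by
  rw [← Fintype.sum_eq_add u v huv fun x hx => hw x hx.1 hx.2, sum_netOut]

lemma isFlowOn_iff_netOut_eq_zero {σ : G.E → ℤˣ} {f : G.E → M} :
    G.IsFlowOn σ f ↔ ∀ v, G.netOut (fun e => (σ e : ℤ) • f e) v = 0 :=
  isFlow_iff_netOut_eq_zero

lemma IsFlowOn.neg {σ : G.E → ℤˣ} {f : G.E → M} (hf : G.IsFlowOn σ f) : G.IsFlowOn σ (-f) := by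
  simpa [IsFlowOn] using hf.map negAddMonoidHom

lemma netOut_addEdge (G : Multigraph) (u v : G.V) (w : Option G.E → M) (x : G.V) :
    (G.addEdge u v).netOut w x = (if u = x then w none else 0) - (if v = x then w none else 0) +
      G.netOut (fun e => w (some e)) x := by
  change ∑ e ∈ univ.filter (fun e : Option G.E => e.elim u G.src = x), w e -
    ∑ e ∈ univ.filter (fun e : Option G.E => e.elim v G.tgt = x), w e = _
  rw [sum_filter, sum_filter, Fintype.sum_option, Fintype.sum_option, netOut_apply, sum_filter,
    sum_filter, add_sub_add_comm]
  rfl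

lemma netOut_mem_CPcap {r : ℝ} {H : Multigraph} {cap : H.E → Set (AddCircle r)} {u v : H.V}
    (huv : u ≠ v) {σ : H.E → ℤˣ} {g : H.E → AddCircle r} (hg : ∀ ε, g ε ∈ cap ε)
    (hint : ∀ x, x ≠ u → x ≠ v → H.netOut (fun ε => (σ ε : ℤ) • g ε) x = 0) :
    H.netOut (fun ε => (σ ε : ℤ) • g ε) v ∈ CPcap r H cap u v := by
  set t := H.netOut (fun ε => (σ ε : ℤ) • g ε) v
  have hu : H.netOut (fun ε => (σ ε : ℤ) • g ε) u = -t :=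
    eq_neg_of_add_eq_zero_left (netOut_add_netOut_eq_zero huv hint)
  refine ⟨fun o => o.elim 1 σ, fun o => o.elim t g, ?_, hg, rfl⟩
  refine isFlowOn_iff_netOut_eq_zero.2 fun x => (netOut_addEdge H u v _ x).trans ?_
  by_cases hxu : u = x
  · subst hxu
    simp [hu, huv.symm]
  · by_cases hxv : v = x
    · subst hxv
      simp [hxu, t]
    · simp [hxu, hxv, hint x (Ne.symm hxu) (Ne.symm hxv)]

end Multigraph

section edgeReplace

variable {G : Multigraph} {H : G.E → Multigraph} {a b : ∀ e, (H e).V}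

lemma erEmbed_eq_inl_iff {e : G.E} (hab : a e ≠ b e) {x : (H e).V} {v : G.V} :
    erEmbed G H a b e x = Sum.inl v ↔ (x = a e ∧ G.src e = v) ∨ (x = b e ∧ G.tgt e = v) := by
  unfold erEmbed
  split_ifs with h1 h2 <;> simp_all [Ne.symm hab]

lemma erEmbed_eq_inr_iff {e : G.E} {x x₀ : (H e).V} (h : x₀ ≠ a e ∧ x₀ ≠ b e) :
    erEmbed G H a b e x = Sum.inr ⟨e, x₀, h⟩ ↔ x = x₀ := by
  unfold erEmbed
  split_ifs with h1 h2 <;> aesop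

lemma erEmbed_ne_inr {e e₀ : G.E} (hne : e ≠ e₀) (x : (H e).V) {x₀ : (H e₀).V}
    (h : x₀ ≠ a e₀ ∧ x₀ ≠ b e₀) : erEmbed G H a b e x ≠ Sum.inr ⟨e₀, x₀, h⟩ := by
  unfold erEmbed
  split_ifs <;> simp [hne]

variable {M : Type*} [AddCommGroup M]

lemma netOut_edgeReplace (w : (Σ e : G.E, (H e).E) → M)
    (y : G.V ⊕ Σ e : G.E, {x : (H e).V // x ≠ a e ∧ x ≠ b e}) :
    (edgeReplace G H a b).netOut w y =
      ∑ e, ∑ x ∈ univ.filter (erEmbed G H a b e · = y), (H e).netOut (fun ε => w ⟨e, ε⟩) x := by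
  simp_rw [Multigraph.sum_netOut_fiber]
  exact (Multigraph.netOut_apply_eq_sum_ite (G := edgeReplace G H a b) w y).trans
    (Fintype.sum_sigma _)

lemma netOut_edgeReplace_inr (w : (Σ e : G.E, (H e).E) → M) {e₀ : G.E} {x₀ : (H e₀).V}
    (h : x₀ ≠ a e₀ ∧ x₀ ≠ b e₀) : (edgeReplace G H a b).netOut w (Sum.inr ⟨e₀, x₀, h⟩) =
      (H e₀).netOut (fun ε => w ⟨e₀, ε⟩) x₀ := by
  refine (netOut_edgeReplace w _).trans ?_
  rw [Fintype.sum_eq_single e₀]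
  · simp [erEmbed_eq_inr_iff h, Finset.filter_eq']
  · intro e hne
    simp [erEmbed_ne_inr hne _ h]

lemma netOut_edgeReplace_inl (hab : ∀ e, a e ≠ b e) (w : (Σ e : G.E, (H e).E) → M) (v : G.V) :
    (edgeReplace G H a b).netOut w (Sum.inl v) =
      ∑ e, ((if G.src e = v then (H e).netOut (fun ε => w ⟨e, ε⟩) (a e) else 0) +
        if G.tgt e = v then (H e).netOut (fun ε => w ⟨e, ε⟩) (b e) else 0) := by
  refine (netOut_edgeReplace w _).trans (sum_congr rfl fun e _ => ?_)
  rw [sum_filter, Fintype.sum_eq_add (a e) (b e) (hab e)]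
  · simp [erEmbed_eq_inl_iff (hab e), hab e, (hab e).symm]
  · rintro x ⟨hxa, hxb⟩
    simp [erEmbed_eq_inl_iff (hab e), hxa, hxb]


theorem HasCapFlow.of_edgeReplace {r : ℝ} {G : Multigraph} {H : G.E → Multigraph}
    {a b : ∀ e, (H e).V} (hab : ∀ e, a e ≠ b e) {cap : ∀ e, (H e).E → Set (AddCircle r)}
    (h : HasCapFlow r (edgeReplace G H a b) (fun ee => cap ee.1 ee.2)) :
    HasCapFlow r G (fun e => CPcap r (H e) (cap e) (a e) (b e)) := by
  obtain ⟨σ, g, hg, hcap⟩ := h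
  rw [Multigraph.isFlowOn_iff_netOut_eq_zero] at hg
  set w : ∀ e, (H e).E → AddCircle r := fun e ε => (σ ⟨e, ε⟩ : ℤ) • g ⟨e, ε⟩
  have hint : ∀ e x, x ≠ a e → x ≠ b e → (H e).netOut (w e) x = 0 :=
    fun e x h1 h2 => (netOut_edgeReplace_inr _ ⟨h1, h2⟩).symm.trans (hg _)
  have ha : ∀ e, (H e).netOut (w e) (a e) = -(H e).netOut (w e) (b e) := fun e =>
    eq_neg_of_add_eq_zero_left (Multigraph.netOut_add_netOut_eq_zero (hab e) (hint e))
  refine ⟨1, fun e => (H e).netOut (w e) (b e),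
    Multigraph.isFlowOn_iff_netOut_eq_zero.2 fun v => ?_,
    fun e => Multigraph.netOut_mem_CPcap (hab e) (fun ε => hcap ⟨e, ε⟩) (hint e)⟩
  have hv := (netOut_edgeReplace_inl hab _ v).symm.trans (hg (Sum.inl v))
  refine neg_eq_zero.1 (Eq.trans ?_ hv)
  rw [Multigraph.netOut_apply_eq_sum_ite, ← sum_neg_distrib]
  refine sum_congr rfl fun e _ => ?_
  simp only [Pi.one_apply, Units.val_one, one_smul, ha, w]
  split_ifs <;> abel

end edgeReplace

noncomputable def otherRep (k t : ℝ) : ℝ := if 0 < t then t - k else t + k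

section otherRep

variable {k t : ℝ}

lemma otherRep_otherRep (ht : |t| ∈ Set.Ioo 0 k) : otherRep k (otherRep k t) = t := by
  obtain ⟨h0, hk⟩ := ht
  rw [abs_pos] at h0
  rcases h0.lt_or_gt with h | h
  · rw [abs_of_neg h] at hk
    simp [otherRep, h.not_gt, show 0 < t + k by linarith]
  · rw [abs_of_pos h] at hk
    simp [otherRep, h, show ¬ 0 < t - k by linarith]

lemma abs_otherRep (ht : |t| ∈ Set.Ioo 0 k) : |otherRep k t| = k - |t| := by
  obtain ⟨h0, hk⟩ := ht
  rw [abs_pos] at h0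
  rcases h0.lt_or_gt with h | h
  · rw [abs_of_neg h] at hk ⊢
    rw [otherRep, if_neg h.not_gt, abs_of_pos (by linarith)]
    ring
  · rw [abs_of_pos h] at hk ⊢
    rw [otherRep, if_pos h, abs_of_neg (by linarith)]
    ring

lemma otherRep_sub_self : otherRep k t - t = if 0 < t then -k else k := by
  unfold otherRep
  split_ifs <;> ring

lemma coe_otherRep : (otherRep k t : AddCircle k) = t := by
  unfold otherRep
  split_ifs
  · rw [AddCircle.coe_sub, AddCircle.coe_period, sub_zero]
  · rw [AddCircle.coe_add, AddCircle.coe_period, add_zero]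

end otherRep

namespace Multigraph

variable {G : Multigraph}

def FlowArc (w : G.E → ℝ) (e : G.E) (v v' : G.V) : Prop :=
  (G.src e = v ∧ G.tgt e = v' ∧ 0 < w e) ∨ (G.src e = v' ∧ G.tgt e = v ∧ w e < 0)

def FlowWalk (w : G.E → ℝ) : G.V → List G.E → G.V → Prop
  | v, [], v' => v = v'
  | v, e :: l, v' => ∃ u, G.FlowArc w e v u ∧ FlowWalk w u l v'

lemma FlowArc.unique {w : G.E → ℝ} {e : G.E} {v₁ v₂ v₁' v₂' : G.V} (h₁ : G.FlowArc w e v₁ v₂)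
    (h₁' : G.FlowArc w e v₁' v₂') : v₁ = v₁' ∧ v₂ = v₂' := by
  unfold FlowArc at h₁ h₁'
  rcases h₁ with ⟨rfl, rfl, h⟩ | ⟨rfl, rfl, h⟩ <;>
    rcases h₁' with ⟨h1, h2, h'⟩ | ⟨h1, h2, h'⟩ <;>
    first | exact ⟨h1, h2⟩ | exact ⟨h2, h1⟩ | linarith

lemma flowWalk_append {w : G.E → ℝ} (l₁ l₂ : List G.E) (v v' : G.V) :
    G.FlowWalk w v (l₁ ++ l₂) v' ↔ ∃ u, G.FlowWalk w v l₁ u ∧ G.FlowWalk w u l₂ v' := by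
  induction l₁ generalizing v with
  | nil => simp [FlowWalk]
  | cons e l ih => simp only [List.cons_append, FlowWalk, ih]; aesop

lemma FlowWalk.congr {w w' : G.E → ℝ} {v v' : G.V} {l : List G.E} (h : G.FlowWalk w v l v')
    (hw : ∀ e ∈ l, w' e = w e) : G.FlowWalk w' v l v' := by
  induction l generalizing v with
  | nil => exact h
  | cons e l ih =>
    obtain ⟨u, harc, hl⟩ := h
    refine ⟨u, ?_, ih hl fun e' he' => hw e' (List.mem_cons_of_mem _ he')⟩
    rwa [FlowArc, hw e List.mem_cons_self]

lemma FlowWalk.exists_nodup {w : G.E → ℝ} {v v' : G.V} {l : List G.E} (h : G.FlowWalk w v l v') :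
    ∃ l', l'.Nodup ∧ G.FlowWalk w v l' v' := by
  induction l generalizing v with
  | nil => exact ⟨[], List.nodup_nil, h⟩
  | cons e l ih =>
    obtain ⟨u, harc, hl⟩ := h
    obtain ⟨l', hnodup, hl'⟩ := ih hl
    by_cases he : e ∈ l'
    · -- cut the walk short at the later use of `e`
      obtain ⟨l₁, l₂, rfl⟩ := List.append_of_mem he
      obtain ⟨u₁, -, u₂, harc', hl₂⟩ := (flowWalk_append _ _ _ _).1 hl'
      obtain ⟨-, rfl⟩ := harc'.unique harc
      exact ⟨e :: l₂, (List.nodup_append.1 hnodup).2.1, u₂, harc, hl₂⟩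
    · exact ⟨e :: l', List.nodup_cons.2 ⟨he, hnodup⟩, u, harc, hl'⟩

lemma sum_netOut_nonpos_of_flowArc_closed (w : G.E → ℝ) (S : Finset G.V)
    (hS : ∀ e u u', u ∈ S → G.FlowArc w e u u' → u' ∈ S) : ∑ v ∈ S, G.netOut w v ≤ 0 := by
  rw [sum_netOut_eq_sum_ite]
  refine sum_nonpos fun e _ => ?_
  by_cases hsrc : G.src e ∈ S <;> by_cases htgt : G.tgt e ∈ S <;> simp only [hsrc, htgt, if_true,
    if_false, sub_self, le_refl, sub_zero, zero_sub, neg_nonpos]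
  · by_contra! hpos
    exact htgt (hS e _ _ hsrc (Or.inl ⟨rfl, rfl, hpos⟩))
  · by_contra! hneg
    exact hsrc (hS e _ _ htgt (Or.inr ⟨rfl, rfl, hneg⟩))

variable {k : ℝ} {y : G.E → ℝ}

noncomputable def liftVal (k : ℝ) (y : G.E → ℝ) (s : G.E → Bool) (e : G.E) : ℝ :=
  if s e then otherRep k (y e) else y e

noncomputable def liftImbalance (k : ℝ) (y : G.E → ℝ) (s : G.E → Bool) : ℝ :=
  ∑ v, |G.netOut (liftVal k y s) v|

lemma abs_liftVal (hy : ∀ e, |y e| ∈ Set.Ioo 0 k) (s : G.E → Bool) (e : G.E) :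
    |liftVal k y s e| = |y e| ∨ |liftVal k y s e| = k - |y e| := by
  unfold liftVal
  split_ifs
  · exact Or.inr (abs_otherRep (hy e))
  · exact Or.inl rfl

lemma liftVal_flip (hy : ∀ e, |y e| ∈ Set.Ioo 0 k) (s : G.E → Bool) (e : G.E) :
    liftVal k y (Function.update s e (!s e)) =
      liftVal k y s + Pi.single e (otherRep k (liftVal k y s e) - liftVal k y s e) := by
  funext e'
  rcases eq_or_ne e' e with rfl | he
  · cases hs : s e'
    · simp [liftVal, hs]
    · simp [liftVal, hs, otherRep_otherRep (hy e')]
  · simp [liftVal, he]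

lemma netOut_liftVal_flip (hy : ∀ e, |y e| ∈ Set.Ioo 0 k) {s : G.E → Bool} {e : G.E}
    {v v' : G.V} (harc : G.FlowArc (liftVal k y s) e v v') (u : G.V) :
    G.netOut (liftVal k y (Function.update s e (!s e))) u =
      G.netOut (liftVal k y s) u - (if v = u then k else 0) + if v' = u then k else 0 := by
  rw [liftVal_flip hy, map_add, Pi.add_apply, netOut_single, otherRep_sub_self]
  rcases harc with ⟨rfl, rfl, hpos⟩ | ⟨rfl, rfl, hneg⟩
  · simp only [if_pos hpos]
    split_ifs <;> ring
  · simp only [if_neg hneg.not_gt]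
    split_ifs <;> ring

lemma exists_netOut_liftVal_eq_zsmul (hflow : G.IsFlow (fun e => (y e : AddCircle k)))
    (s : G.E → Bool) (v : G.V) : ∃ n : ℤ, G.netOut (liftVal k y s) v = n • k := by
  have hcoe : ((G.netOut (liftVal k y s) v : ℝ) : AddCircle k) = 0 := by
    have hval : ∀ e, ((liftVal k y s e : ℝ) : AddCircle k) = y e := fun e => by
      unfold liftVal; split_ifs <;> simp [coe_otherRep]
    have := netOut_map (QuotientAddGroup.mk' (AddSubgroup.zmultiples k)) (liftVal k y s) v
    simp only [QuotientAddGroup.mk'_apply] at this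
    rw [← this]
    simp_rw [hval]
    exact isFlow_iff_netOut_eq_zero.1 hflow v
  obtain ⟨n, hn⟩ := (AddCircle.coe_eq_zero_iff k).1 hcoe
  exact ⟨n, hn.symm⟩

lemma le_netOut_liftVal_of_pos (hflow : G.IsFlow (fun e => (y e : AddCircle k))) (hk : 0 < k)
    {s : G.E → Bool} {v : G.V} (hv : 0 < G.netOut (liftVal k y s) v) :
    k ≤ G.netOut (liftVal k y s) v := by
  obtain ⟨n, hn⟩ := exists_netOut_liftVal_eq_zsmul hflow s v
  rw [hn, zsmul_eq_mul] at hv ⊢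
  have hn1 : (1 : ℝ) ≤ n := by exact_mod_cast (pos_of_mul_pos_left hv hk.le : (0 : ℝ) < n)
  nlinarith

lemma netOut_liftVal_le_of_neg (hflow : G.IsFlow (fun e => (y e : AddCircle k))) (hk : 0 < k)
    {s : G.E → Bool} {v : G.V} (hv : G.netOut (liftVal k y s) v < 0) :
    G.netOut (liftVal k y s) v ≤ -k := by
  obtain ⟨n, hn⟩ := exists_netOut_liftVal_eq_zsmul hflow s v
  rw [hn, zsmul_eq_mul] at hv ⊢
  have hn0 : n < 0 := by exact_mod_cast neg_of_mul_neg_left hv hk.le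
  have hn1 : (n : ℝ) ≤ -1 := by exact_mod_cast (show n ≤ -1 by omega)
  nlinarith

variable (hy : ∀ e, |y e| ∈ Set.Ioo 0 k) (hflow : G.IsFlow (fun e => (y e : AddCircle k)))
include hy hflow

/-- Augmenting along a walk with distinct edges: flipping its edges one at a time never
increases the imbalance, and the first flip that reaches a deficit vertex decreases it. -/
lemma exists_liftImbalance_lt_of_flowWalk (l : List G.E) (hl : l.Nodup) (s : G.E → Bool)
    {v w : G.V} (hwalk : G.FlowWalk (liftVal k y s) v l w)
    (hv : 0 < G.netOut (liftVal k y s) v) (hw : G.netOut (liftVal k y s) w < 0) :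
    ∃ s', liftImbalance k y s' < liftImbalance k y s := by
  induction l generalizing s v with
  | nil => cases hwalk; linarith
  | cons e l ih =>
    obtain ⟨he, hl⟩ := List.nodup_cons.1 hl
    obtain ⟨v', harc, hwalk⟩ := hwalk
    rcases eq_or_ne v v' with rfl | hvv'
    · exact ih hl s hwalk hv hw
    have hk : 0 < k := (hy e).1.trans (hy e).2
    have hflip := netOut_liftVal_flip hy harc
    have hΦ : liftImbalance k y (Function.update s e (!s e)) - liftImbalance k y s =
        (|G.netOut (liftVal k y s) v - k| - |G.netOut (liftVal k y s) v|) +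
          (|G.netOut (liftVal k y s) v' + k| - |G.netOut (liftVal k y s) v'|) := by
      rw [liftImbalance, liftImbalance, ← sum_sub_distrib, Fintype.sum_eq_add v v' hvv']
      · simp [hflip, hvv', hvv'.symm]
      · rintro u ⟨hu, hu'⟩
        simp [hflip, Ne.symm hu, Ne.symm hu']
    have hvk := le_netOut_liftVal_of_pos hflow hk hv
    rw [abs_of_nonneg (by linarith), abs_of_pos hv] at hΦ
    by_cases hv' : G.netOut (liftVal k y s) v' < 0
    · have := netOut_liftVal_le_of_neg hflow hk hv'
      rw [abs_of_nonpos (by linarith), abs_of_neg hv'] at hΦ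
      exact ⟨Function.update s e (!s e), by linarith⟩
    · push Not at hv'
      rw [abs_of_nonneg (by linarith), abs_of_nonneg hv'] at hΦ
      have hwv : w ≠ v := by rintro rfl; linarith
      have hwv' : w ≠ v' := by rintro rfl; linarith
      obtain ⟨s'', hs''⟩ := ih hl (Function.update s e (!s e))
        (hwalk.congr fun e' he' => by
          rw [liftVal_flip hy, Pi.add_apply, Pi.single_eq_of_ne (by rintro rfl; exact he he'),
            add_zero])
        (by rw [hflip, if_neg hvv', if_pos rfl]; linarith)
        (by rw [hflip]; simpa [hwv.symm, hwv'.symm] using hw)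
      exact ⟨s'', by linarith⟩

lemma netOut_liftVal_eq_zero_of_isMin {s : G.E → Bool}
    (hmin : ∀ s', liftImbalance k y s ≤ liftImbalance k y s') (v : G.V) :
    G.netOut (liftVal k y s) v = 0 := by
  classical
  by_contra hne
  obtain ⟨v₀, -, hv₀⟩ :=
    exists_pos_of_sum_zero_of_exists_nonzero _ (sum_netOut _) ⟨v, mem_univ _, hne⟩
  set S := univ.filter fun u => ∃ l, G.FlowWalk (liftVal k y s) v₀ l u
  have hv₀S : v₀ ∈ S := mem_filter.2 ⟨mem_univ _, [], rfl⟩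
  have hS : ∀ e u u', u ∈ S → G.FlowArc (liftVal k y s) e u u' → u' ∈ S := by
    simp only [S, mem_filter, mem_univ, true_and]
    rintro e u u' ⟨l, hl⟩ harc
    exact ⟨l ++ [e], (flowWalk_append _ _ _ _).2 ⟨u, hl, u', harc, rfl⟩⟩
  obtain ⟨w, hwS, hw⟩ : ∃ w ∈ S, G.netOut (liftVal k y s) w < 0 := by
    by_contra! h
    linarith [sum_netOut_nonpos_of_flowArc_closed _ S hS, single_le_sum h hv₀S]
  obtain ⟨l, hl⟩ := (mem_filter.1 hwS).2
  obtain ⟨l', hnodup, hl'⟩ := hl.exists_nodup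
  obtain ⟨s', hs'⟩ := exists_liftImbalance_lt_of_flowWalk hy hflow l' hnodup s hl' hv₀ hw
  exact (hmin s').not_gt hs'

theorem exists_isFlow_abs_eq :
    ∃ Y : G.E → ℝ, G.IsFlow Y ∧ ∀ e, |Y e| = |y e| ∨ |Y e| = k - |y e| := by
  obtain ⟨s, hs⟩ := Finite.exists_min (liftImbalance k y)
  exact ⟨liftVal k y s, isFlow_iff_netOut_eq_zero.2 (netOut_liftVal_eq_zero_of_isMin hy hflow hs),
    abs_liftVal hy s⟩

end Multigraph

lemma openArc_five_add_three (a : ℝ) :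
    openArc 5 a (a + 3) = ((↑) : ℝ → AddCircle (5 : ℝ)) '' Set.Ioo a (a + 3) := by
  have hfract : Int.fract ((a - (a + 3)) / 5) = 2 / 5 := by
    rw [show (a - (a + 3)) / 5 = 2 / 5 + ((-1 : ℤ) : ℝ) by push_cast; ring,
      Int.fract_add_intCast, Int.fract_eq_self.2 ⟨by norm_num, by norm_num⟩]
  rw [openArc, hfract]
  norm_num

lemma openArc_five_one_four :
    openArc 5 1 4 = ((↑) : ℝ → AddCircle (5 : ℝ)) '' Set.Ioo 1 4 := by
  convert openArc_five_add_three 1 using 3 <;> norm_num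

lemma neg_mem_openArc_five_one_four {x : AddCircle (5 : ℝ)} (hx : x ∈ openArc 5 1 4) :
    -x ∈ openArc 5 1 4 := by
  rw [openArc_five_one_four] at hx ⊢
  obtain ⟨t, ht, rfl⟩ := hx
  refine ⟨5 - t, ⟨by linarith [ht.2], by linarith [ht.1]⟩, ?_⟩
  rw [AddCircle.coe_sub, AddCircle.coe_period, zero_sub]

lemma add_mem_openArc_five_one_four {z : ℝ} {x : AddCircle (5 : ℝ)}
    (hx : x ∈ openArc 5 z (z + 3)) : x + ↑(1 - z) ∈ openArc 5 1 4 := by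
  rw [openArc_five_add_three] at hx
  rw [openArc_five_one_four]
  obtain ⟨t, ht, rfl⟩ := hx
  exact ⟨t + (1 - z), ⟨by linarith [ht.1], by linarith [ht.2]⟩, AddCircle.coe_add _ _ _⟩

lemma add_zsmul_mem_openArc_five_one_four {z : ℝ} {A : Set (AddCircle (5 : ℝ))}
    (hA : A ⊆ openArc 5 z (z + 3)) (hneg : ∀ x ∈ A, -x ∈ A) {x : AddCircle (5 : ℝ)} (hx : x ∈ A)
    {c : ℤ} (hc : c = 1 ∨ c = -1) : x + c • ↑(1 - z) ∈ openArc 5 1 4 := by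
  rcases hc with rfl | rfl
  · simpa using add_mem_openArc_five_one_four (hA hx)
  · have h := neg_mem_openArc_five_one_four (add_mem_openArc_five_one_four (hA (hneg x hx)))
    rwa [neg_add, neg_neg, ← neg_one_zsmul] at h

lemma CP_five (G : Multigraph) (u v : G.V) :
    CP 5 G u v = CPcap 5 G (fun _ => openArc 5 1 4) u v := by
  norm_num [CP]

lemma neg_mem_CPcap {r : ℝ} {G : Multigraph} {cap : G.E → Set (AddCircle r)}
    (hcap : ∀ e, ∀ x ∈ cap e, -x ∈ cap e) {u v : G.V} {t : AddCircle r}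
    (ht : t ∈ CPcap r G cap u v) : -t ∈ CPcap r G cap u v := by
  obtain ⟨σ, f, hf, hfcap, rfl⟩ := ht
  exact ⟨σ, -f, hf.neg, fun e => hcap e _ (hfcap e), rfl⟩

lemma Graphic.neg_mem {A : Set (AddCircle (5 : ℝ))} (hA : Graphic 5 A) {x : AddCircle (5 : ℝ)}
    (hx : x ∈ A) : -x ∈ A := by
  obtain ⟨G, u, v, -, rfl⟩ := hA
  rw [CP_five] at hx ⊢
  exact neg_mem_CPcap (fun _ _ => neg_mem_openArc_five_one_four) hx

namespace Multigraph

variable {G : Multigraph}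

lemma IsFlow.hasCNZF {Y : G.E → ℝ} (hY : G.IsFlow Y) {r : ℝ}
    (h : ∀ e, |Y e| ∈ Set.Icc 1 (r - 1)) : G.HasCNZF r := by
  refine ⟨fun e => if 0 ≤ Y e then 1 else -1, fun e => |Y e|, ?_, h⟩
  have hsign : (fun e => ((if 0 ≤ Y e then 1 else -1 : ℤˣ) : ℤ) • |Y e|) = Y := by
    funext e
    split_ifs with hY0
    · simp [abs_of_nonneg hY0]
    · simp [abs_of_neg (not_le.1 hY0)]
  unfold IsFlowOn
  rw [hsign]
  exact hY

lemma HasCNZF.mono {r r' : ℝ} (h : G.HasCNZF r) (hr : r ≤ r') : G.HasCNZF r' := by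
  obtain ⟨σ, f, hf, hfr⟩ := h
  exact ⟨σ, f, hf, fun e => ⟨(hfr e).1, by linarith [(hfr e).2]⟩⟩

lemma IsFlow.exists_hasCNZF_lt {Y : G.E → ℝ} (hY : G.IsFlow Y) {k : ℝ} (h1 : ∀ e, 1 ≤ |Y e|)
    (hk : ∀ e, |Y e| < k - 1) : ∃ r < k, G.HasCNZF r := by
  rcases isEmpty_or_nonempty G.E with hE | hE
  · exact ⟨k - 1, by linarith, hY.hasCNZF isEmptyElim⟩
  · obtain ⟨e₀, he₀⟩ := Finite.exists_max fun e => |Y e|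
    exact ⟨|Y e₀| + 1, by linarith [hk e₀], hY.hasCNZF fun e => ⟨h1 e, by linarith [he₀ e]⟩⟩

lemma exists_hasCNZF_lt_five_of_hasCapFlow (h : HasCapFlow 5 G (fun _ => openArc 5 1 4)) :
    ∃ r < 5, G.HasCNZF r := by
  obtain ⟨σ, f, hf, hcap⟩ := h
  simp only [openArc_five_one_four] at hcap
  choose x hx hxf using hcap
  have hy : ∀ e, |(σ e : ℤ) • x e| = x e := fun e => by
    rcases Int.units_eq_one_or (σ e) with h | h <;>
      simp [h, abs_of_pos (zero_lt_one.trans (hx e).1)]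
  have hflow : G.IsFlow fun e => (((σ e : ℤ) • x e : ℝ) : AddCircle (5 : ℝ)) := by
    unfold IsFlowOn at hf
    simpa only [AddCircle.coe_zsmul, hxf] using hf
  obtain ⟨Y, hY, hYabs⟩ := exists_isFlow_abs_eq
    (fun e => by rw [hy]; exact ⟨by linarith [(hx e).1], by linarith [(hx e).2]⟩) hflow
  refine hY.exists_hasCNZF_lt (fun e => ?_) (fun e => ?_) <;>
    rcases hYabs e with h | h <;> rw [h, hy] <;> linarith [(hx e).1, (hx e).2]

lemma HasCNZF.hasCapFlow_five {r : ℝ} (h : G.HasCNZF r) (hr : r < 5) :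
    HasCapFlow 5 G (fun _ => openArc 5 1 4) := by
  set r' := max r 2
  obtain ⟨σ, f, hf, hfr⟩ := h.mono (le_max_left r 2)
  have hr' : 2 ≤ r' := le_max_right _ _
  have hr'5 : r' < 5 := max_lt hr (by norm_num)
  refine ⟨σ, fun e => ((5 / r' * f e : ℝ) : AddCircle (5 : ℝ)), ?_, fun e => ?_⟩
  · have := hf.map ((QuotientAddGroup.mk' (AddSubgroup.zmultiples (5 : ℝ))).comp
      (AddMonoidHom.mulLeft (5 / r')))
    unfold IsFlowOn
    convert this using 2 with e
    rw [AddMonoidHom.comp_apply, AddMonoidHom.coe_mulLeft, QuotientAddGroup.mk'_apply,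
      zsmul_eq_mul, mul_left_comm, ← zsmul_eq_mul, AddCircle.coe_zsmul]
  · have h5r : 1 < 5 / r' := by rw [lt_div_iff₀ (by linarith)]; linarith
    have hupper : 5 / r' * f e ≤ 5 / r' * (r' - 1) := by gcongr; exact (hfr e).2
    have hval : 5 / r' * (r' - 1) = 5 - 5 / r' := by field_simp
    rw [openArc_five_one_four]
    exact ⟨_, ⟨by nlinarith [(hfr e).1], by linarith⟩, rfl⟩

theorem five_le_circFlowNumber_iff (G : Multigraph) :
    ((5 : ℝ) : EReal) ≤ circFlowNumber G ↔ ¬ HasCapFlow 5 G (fun _ => openArc 5 1 4) := by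
  constructor
  · intro h hflow
    obtain ⟨r, hr, hG⟩ := exists_hasCNZF_lt_five_of_hasCapFlow hflow
    exact (h.trans (sInf_le ⟨r, rfl, hG⟩)).not_gt (by exact_mod_cast hr)
  · intro h
    refine le_sInf ?_
    rintro _ ⟨r, rfl, hr⟩
    by_contra! hlt
    exact h (hr.hasCapFlow_five (by exact_mod_cast hlt))

lemma IsFlowOn.add_zsmul {M : Type*} [AddCommGroup M] {σ : G.E → ℤˣ} {f : G.E → M}
    (hf : G.IsFlowOn σ f) {d : G.E → ℤ} (hd : G.IsFlow d) (t : M) :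
    G.IsFlowOn σ (fun e => f e + ((σ e : ℤ) * d e) • t) := by
  have hsplit : (fun e => (σ e : ℤ) • (f e + ((σ e : ℤ) * d e) • t)) =
      (fun e => (σ e : ℤ) • f e) + fun e => zmultiplesHom M t (d e) := by
    funext e
    simp [smul_add, smul_smul, ← mul_assoc]
  unfold IsFlowOn
  rw [hsplit]
  exact IsFlow.add hf (hd.map _)

/-- The signed edge vector of the closed walk `p 0, pe 0, p 1, …, pe (m-1), p m`: the sign of
the `i`-th term records whether `pe i` is traversed along its reference direction. -/
def walkVector (G : Multigraph) (m : ℕ) (p : ℕ → G.V) (pe : ℕ → G.E) : G.E → ℤ :=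
  ∑ i ∈ range m, Pi.single (pe i) (if G.src (pe i) = p i then 1 else -1)

variable {m : ℕ} {p : ℕ → G.V} {pe : ℕ → G.E}

lemma isFlow_walkVector (hclosed : p m = p 0)
    (hinc : ∀ i < m, (G.src (pe i) = p i ∧ G.tgt (pe i) = p (i + 1)) ∨
      (G.src (pe i) = p (i + 1) ∧ G.tgt (pe i) = p i)) :
    G.IsFlow (G.walkVector m p pe) := by
  rw [isFlow_iff_netOut_eq_zero]
  intro v
  have hstep : ∀ i ∈ range m,
      G.netOut (Pi.single (pe i) (if G.src (pe i) = p i then (1 : ℤ) else -1)) v =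
        (if p i = v then 1 else 0) - if p (i + 1) = v then 1 else 0 := by
    intro i hi
    rw [netOut_single]
    rcases hinc i (mem_range.1 hi) with ⟨hs, ht⟩ | ⟨hs, ht⟩
    · simp [hs, ht]
    · rw [hs, ht]
      by_cases hp : p (i + 1) = p i
      · simp [hp]
      · simp only [if_neg hp]
        split_ifs <;> simp
  rw [walkVector, map_sum, Finset.sum_apply, sum_congr rfl hstep,
    sum_range_sub' (fun i => if p i = v then (1 : ℤ) else 0), hclosed, sub_self]

lemma walkVector_apply_eq_one_or (hinjE : Set.InjOn pe (Set.Iio m)) {i : ℕ} (hi : i < m) :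
    G.walkVector m p pe (pe i) = 1 ∨ G.walkVector m p pe (pe i) = -1 := by
  rw [walkVector, Finset.sum_apply, sum_eq_single i]
  · simp only [Pi.single_eq_same]
    split_ifs <;> simp
  · intro j hj hji
    exact Pi.single_eq_of_ne (fun h => hji (hinjE (mem_range.1 hj) hi h.symm)) _
  · exact fun h => absurd (mem_range.2 hi) h

lemma walkVector_apply_eq_zero {e : G.E} (he : ∀ j < m, e ≠ pe j) :
    G.walkVector m p pe e = 0 := by
  rw [walkVector, Finset.sum_apply]
  exact sum_eq_zero fun j hj => Pi.single_eq_of_ne (he j (mem_range.1 hj)) _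

theorem hasCapFlow_openArc_of_cycle (hclosed : p m = p 0) (hinjE : Set.InjOn pe (Set.Iio m))
    (hinc : ∀ i < m, (G.src (pe i) = p i ∧ G.tgt (pe i) = p (i + 1)) ∨
      (G.src (pe i) = p (i + 1) ∧ G.tgt (pe i) = p i))
    {z : ℝ} {cap : G.E → Set (AddCircle (5 : ℝ))}
    (hsub : ∀ i < m, cap (pe i) ⊆ openArc 5 z (z + 3))
    (hneg : ∀ i < m, ∀ x ∈ cap (pe i), -x ∈ cap (pe i))
    (hout : ∀ e, (∀ j < m, e ≠ pe j) → cap e ⊆ openArc 5 1 4) (h : HasCapFlow 5 G cap) :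
    HasCapFlow 5 G (fun _ => openArc 5 1 4) := by
  obtain ⟨σ, f, hf, hcap⟩ := h
  refine ⟨σ, _, hf.add_zsmul (isFlow_walkVector hclosed hinc) ((1 - z : ℝ) : AddCircle (5 : ℝ)),
    fun e => ?_⟩
  by_cases he : ∃ i < m, pe i = e
  · obtain ⟨i, hi, rfl⟩ := he
    refine add_zsmul_mem_openArc_five_one_four (hsub i hi) (hneg i hi) (hcap _) ?_
    rcases walkVector_apply_eq_one_or (p := p) hinjE hi with h | h <;>
      rcases Int.units_eq_one_or (σ (pe i)) with h' | h' <;> simp [h, h']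
  · push Not at he
    have he' : ∀ j < m, e ≠ pe j := fun j hj => (he j hj).symm
    simpa [walkVector_apply_eq_zero he'] using hout e he' (hcap e)

end Multigraph

theorem cycle_replacement_general (G : Multigraph)
    (m : ℕ) (p : ℕ → G.V) (pe : ℕ → G.E)
    (hclosed : p m = p 0)
    (hinjE : Set.InjOn pe (Set.Iio m))
    (hinc : ∀ i < m, (G.src (pe i) = p i ∧ G.tgt (pe i) = p (i + 1)) ∨
      (G.src (pe i) = p (i + 1) ∧ G.tgt (pe i) = p i))
    (T : Set (Set (AddCircle (5 : ℝ)))) (hT : ∀ A ∈ T, Graphic 5 A)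
    (hAmp : ∃ z : ℤ, ∀ A ∈ T, A ⊆ openArc 5 (z : ℝ) ((z : ℝ) + 3))
    (cap : G.E → Set (AddCircle (5 : ℝ)))
    (hcapC : ∀ i < m, cap (pe i) ∈ T)
    (hcapO : ∀ e : G.E, (∀ j < m, e ≠ pe j) → cap e = openArc 5 1 4)
    (hG : ((5 : ℝ) : EReal) ≤ circFlowNumber G) :
    ¬ HasCapFlow 5 G cap ∧
    ∀ (H : G.E → Multigraph) (a b : ∀ e, (H e).V), (∀ e, a e ≠ b e) →
      (∀ e, CP 5 (H e) (a e) (b e) = cap e) →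
      ((5 : ℝ) : EReal) ≤ circFlowNumber (edgeReplace G H a b) := by
  obtain ⟨z, hz⟩ := hAmp
  have hno : ¬ HasCapFlow 5 G cap := fun hflow =>
    (Multigraph.five_le_circFlowNumber_iff G).1 hG <|
      Multigraph.hasCapFlow_openArc_of_cycle hclosed hinjE hinc (fun i hi => hz _ (hcapC i hi))
        (fun i hi _ hx => (hT _ (hcapC i hi)).neg_mem hx) (fun e he => (hcapO e he).subset) hflow
  refine ⟨hno, fun H a b hab hCP => (Multigraph.five_le_circFlowNumber_iff _).2 fun hER => hno ?_⟩
  have hcap : cap = fun e => CPcap 5 (H e) (fun _ => openArc 5 1 4) (a e) (b e) :=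
    funext fun e => (hCP e).symm.trans (CP_five _ _ _)
  exact hcap ▸ HasCapFlow.of_edgeReplace hab hER

/-- Let `C` be a cycle of simple edges in `G` and `T` a
collection of graphic open 5-capacities whose union has amplitude at most 3
(i.e. is contained in an integer interval of length 3).  Give each edge of `C`
a capacity from `T` and every other edge the capacity `(1,4)` of a simple
edge.  If `φ_c(G) ≥ 5` then the resulting capacitated graph admits no
sub-5-MCNZF; consequently every graph obtained from `G` by replacing each edge
of `C` by an `A`-edge with `A ∈ T` (realizing each capacity by a g-edge) has
circular flow number at least 5. -/
theorem cycle_replacement (G : Multigraph)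
    (m : ℕ) (hm : 0 < m) (p : ℕ → G.V) (pe : ℕ → G.E)
    (hclosed : p m = p 0)
    (hinjV : Set.InjOn p (Set.Iio m)) (hinjE : Set.InjOn pe (Set.Iio m))
    (hinc : ∀ i < m, (G.src (pe i) = p i ∧ G.tgt (pe i) = p (i + 1)) ∨
      (G.src (pe i) = p (i + 1) ∧ G.tgt (pe i) = p i))
    (T : Set (Set (AddCircle (5 : ℝ)))) (hT : ∀ A ∈ T, Graphic 5 A)
    (hAmp : ∃ z : ℤ, ∀ A ∈ T, A ⊆ openArc 5 (z : ℝ) ((z : ℝ) + 3))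
    (cap : G.E → Set (AddCircle (5 : ℝ)))
    (hcapC : ∀ i < m, cap (pe i) ∈ T)
    (hcapO : ∀ e : G.E, (∀ j < m, e ≠ pe j) → cap e = openArc 5 1 4)
    (hG : ((5 : ℝ) : EReal) ≤ circFlowNumber G) :
    ¬ HasCapFlow 5 G cap ∧
    ∀ (H : G.E → Multigraph) (a b : ∀ e, (H e).V), (∀ e, a e ≠ b e) →
      (∀ e, CP 5 (H e) (a e) (b e) = cap e) →
      ((5 : ℝ) : EReal) ≤ circFlowNumber (edgeReplace G H a b) :=
  cycle_replacement_general G m p pe hclosed hinjE hinc T hT hAmp cap hcapC hcapO hG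
end

section
/- For any a ∈ ℝ/5ℤ and any d₁, d₂, d₃ all belonging to the open interval (1,2) of ℝ/5ℤ, at least one of the four values a, a + d₁, a + d₁ + d₂, a + d₁ + d₂ + d₃ belongs to the interval (4,1) of ℝ/5ℤ. The same conclusion holds if d₁, d₂, d₃ all belong to the interval (3,4). -/
open Finset


open Finset

lemma arc12 : openArc 5 1 2 = (fun t : ℝ => (t : AddCircle (5:ℝ))) '' Set.Ioo (1:ℝ) 2 := by
  unfold openArc
  rw [show ((1:ℝ)-2)/5 = -1/5 by norm_num, Int.fract,
    show ⌊(-1/5 : ℝ)⌋ = -1 by rw [Int.floor_eq_iff] <;> norm_num]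
  norm_num

lemma arc34 : openArc 5 3 4 = (fun t : ℝ => (t : AddCircle (5:ℝ))) '' Set.Ioo (3:ℝ) 4 := by
  unfold openArc
  rw [show ((3:ℝ)-4)/5 = -1/5 by norm_num, Int.fract,
    show ⌊(-1/5 : ℝ)⌋ = -1 by rw [Int.floor_eq_iff] <;> norm_num]
  norm_num

lemma arc41 : openArc 5 4 1 = (fun t : ℝ => (t : AddCircle (5:ℝ))) '' Set.Ioo (4:ℝ) 6 := by
  unfold openArc
  rw [show ((4:ℝ)-1)/5 = 3/5 by norm_num, Int.fract,
    show ⌊(3/5 : ℝ)⌋ = 0 by rw [Int.floor_eq_iff] <;> norm_num]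
  norm_num

lemma coe_shift (x : ℝ) (n : ℤ) : ((x - 5*n : ℝ) : AddCircle (5:ℝ)) = ↑x := by
  have h0 : ((5*(n:ℝ) : ℝ) : AddCircle (5:ℝ)) = 0 := by
    rw [AddCircle.coe_eq_zero_iff]
    exact ⟨n, by push_cast [zsmul_eq_mul]; ring⟩
  rw [show (x - 5*(n:ℝ)) = x + (-(5*(n:ℝ))) by ring]
  rw [QuotientAddGroup.mk_add, QuotientAddGroup.mk_neg, h0]
  simp

lemma memArc (x : ℝ) (n : ℤ) (h1 : 4 < x - 5*n) (h2 : x - 5*n < 6) :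
    (↑x : AddCircle (5:ℝ)) ∈ openArc 5 4 1 := by
  rw [arc41]
  exact ⟨x - 5*n, ⟨h1, h2⟩, coe_shift x n⟩

lemma key1 (s t1 t2 t3 : ℝ) (hs4 : 4 ≤ s) (hs9 : s < 9)
    (h1a : 1 < t1) (h1b : t1 < 2) (h2a : 1 < t2) (h2b : t2 < 2)
    (h3a : 1 < t3) (h3b : t3 < 2) :
    (∃ n : ℤ, 4 < s - 5*n ∧ s - 5*n < 6) ∨
    (∃ n : ℤ, 4 < s + t1 - 5*n ∧ s + t1 - 5*n < 6) ∨
    (∃ n : ℤ, 4 < s + t1 + t2 - 5*n ∧ s + t1 + t2 - 5*n < 6) ∨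
    (∃ n : ℤ, 4 < s + t1 + t2 + t3 - 5*n ∧ s + t1 + t2 + t3 - 5*n < 6) := by
  rcases eq_or_lt_of_le hs4 with h | h
  · exact Or.inr (Or.inl ⟨0, by push_cast; constructor <;> linarith⟩)
  rcases lt_or_ge s 6 with h6 | h6
  · exact Or.inl ⟨0, by push_cast; constructor <;> linarith⟩
  rcases lt_or_ge 9 (s + t1) with hp | hp
  · exact Or.inr (Or.inl ⟨1, by push_cast; constructor <;> linarith⟩)
  rcases lt_or_ge 9 (s + t1 + t2) with hq | hq
  · exact Or.inr (Or.inr (Or.inl ⟨1, by push_cast; constructor <;> linarith⟩))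
  · exact Or.inr (Or.inr (Or.inr ⟨1, by push_cast; constructor <;> linarith⟩))

lemma key2 (s t1 t2 t3 : ℝ) (hs4 : 4 ≤ s) (hs9 : s < 9)
    (h1a : 3 < t1) (h1b : t1 < 4) (h2a : 3 < t2) (h2b : t2 < 4)
    (h3a : 3 < t3) (h3b : t3 < 4) :
    (∃ n : ℤ, 4 < s - 5*n ∧ s - 5*n < 6) ∨
    (∃ n : ℤ, 4 < s + t1 - 5*n ∧ s + t1 - 5*n < 6) ∨
    (∃ n : ℤ, 4 < s + t1 + t2 - 5*n ∧ s + t1 + t2 - 5*n < 6) ∨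
    (∃ n : ℤ, 4 < s + t1 + t2 + t3 - 5*n ∧ s + t1 + t2 + t3 - 5*n < 6) := by
  rcases eq_or_lt_of_le hs4 with h | h
  · -- s = 4 : p1 ∈ (7,8), p2 ∈ (10,12)
    rcases lt_or_ge (s + t1 + t2) 11 with hq | hq
    · exact Or.inr (Or.inr (Or.inl ⟨1, by push_cast; constructor <;> linarith⟩))
    · exact Or.inr (Or.inr (Or.inr ⟨2, by push_cast; constructor <;> linarith⟩))
  rcases lt_or_ge s 6 with h6 | h6
  · exact Or.inl ⟨0, by push_cast; constructor <;> linarith⟩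
  rcases lt_or_ge (s + t1) 11 with hp | hp
  · exact Or.inr (Or.inl ⟨1, by push_cast; constructor <;> linarith⟩)
  rcases lt_or_ge (s + t1 + t2) 16 with hq | hq
  · exact Or.inr (Or.inr (Or.inl ⟨2, by push_cast; constructor <;> linarith⟩))
  · exact Or.inr (Or.inr (Or.inr ⟨3, by push_cast; constructor <;> linarith⟩))

lemma memAll (s t1 t2 t3 : ℝ)
    (h : (∃ n : ℤ, 4 < s - 5*n ∧ s - 5*n < 6) ∨
      (∃ n : ℤ, 4 < s + t1 - 5*n ∧ s + t1 - 5*n < 6) ∨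
      (∃ n : ℤ, 4 < s + t1 + t2 - 5*n ∧ s + t1 + t2 - 5*n < 6) ∨
      (∃ n : ℤ, 4 < s + t1 + t2 + t3 - 5*n ∧ s + t1 + t2 + t3 - 5*n < 6)) :
    (↑s : AddCircle (5:ℝ)) ∈ openArc 5 4 1 ∨
      (↑(s + t1) : AddCircle (5:ℝ)) ∈ openArc 5 4 1 ∨
      (↑(s + t1 + t2) : AddCircle (5:ℝ)) ∈ openArc 5 4 1 ∨
      (↑(s + t1 + t2 + t3) : AddCircle (5:ℝ)) ∈ openArc 5 4 1 := by
  rcases h with ⟨n,h1,h2⟩|⟨n,h1,h2⟩|⟨n,h1,h2⟩|⟨n,h1,h2⟩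
  · exact Or.inl (memArc _ n h1 h2)
  · exact Or.inr (Or.inl (memArc _ n h1 h2))
  · exact Or.inr (Or.inr (Or.inl (memArc _ n h1 h2)))
  · exact Or.inr (Or.inr (Or.inr (memArc _ n h1 h2)))

/-- For any `a ∈ ℝ/5ℤ` and any `d₁, d₂, d₃` all in the open
interval `(1,2)` of `ℝ/5ℤ`, at least one of `a`, `a + d₁`, `a + d₁ + d₂`,
`a + d₁ + d₂ + d₃` lies in the interval `(4,1)`; the same holds if `d₁, d₂,
d₃` all lie in `(3,4)`. -/
theorem partial_sums_hit_arc (a d₁ d₂ d₃ : AddCircle (5 : ℝ)) :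
    ((d₁ ∈ openArc 5 1 2 → d₂ ∈ openArc 5 1 2 → d₃ ∈ openArc 5 1 2 →
      (a ∈ openArc 5 4 1 ∨ a + d₁ ∈ openArc 5 4 1 ∨
        a + d₁ + d₂ ∈ openArc 5 4 1 ∨ a + d₁ + d₂ + d₃ ∈ openArc 5 4 1))) ∧
    ((d₁ ∈ openArc 5 3 4 → d₂ ∈ openArc 5 3 4 → d₃ ∈ openArc 5 3 4 →
      (a ∈ openArc 5 4 1 ∨ a + d₁ ∈ openArc 5 4 1 ∨
        a + d₁ + d₂ ∈ openArc 5 4 1 ∨ a + d₁ + d₂ + d₃ ∈ openArc 5 4 1))) := by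
  induction a using QuotientAddGroup.induction_on with
  | H x =>
  set k : ℤ := ⌊(x-4)/5⌋ with hk
  have hfr := Int.fract_nonneg ((x-4)/5)
  have hfr' := Int.fract_lt_one ((x-4)/5)
  rw [Int.fract] at hfr hfr'
  have hs4 : (4:ℝ) ≤ x - 5*k := by rw [hk]; linarith
  have hs9 : x - 5*(k:ℝ) < 9 := by rw [hk]; linarith
  have hx : (↑x : AddCircle (5:ℝ)) = ↑(x - 5*(k:ℝ)) := (coe_shift x k).symm
  constructor
  · intro h1 h2 h3
    rw [arc12] at h1 h2 h3
    obtain ⟨t1, ⟨h1a, h1b⟩, rfl⟩ := h1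
    obtain ⟨t2, ⟨h2a, h2b⟩, rfl⟩ := h2
    obtain ⟨t3, ⟨h3a, h3b⟩, rfl⟩ := h3
    simp only [hx, ← QuotientAddGroup.mk_add]
    exact memAll _ t1 t2 t3 (key1 _ t1 t2 t3 hs4 hs9 h1a h1b h2a h2b h3a h3b)
  · intro h1 h2 h3
    rw [arc34] at h1 h2 h3
    obtain ⟨t1, ⟨h1a, h1b⟩, rfl⟩ := h1
    obtain ⟨t2, ⟨h2a, h2b⟩, rfl⟩ := h2
    obtain ⟨t3, ⟨h3a, h3b⟩, rfl⟩ := h3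
    simp only [hx, ← QuotientAddGroup.mk_add]
    exact memAll _ t1 t2 t3 (key2 _ t1 t2 t3 hs4 hs9 h1a h1b h2a h2b h3a h3b)
end

section
/- If a 3-hypergraph H is 2-colorable, then the capacitated graph G(H) admits a sub-5-MCNZF. -/
open Finset


open Finset

section GH

variable {n N : ℕ} (tri : Fin N → Fin 3 → Fin n)

/-- The occurrences of the node `x`: pairs `(T, i)` such that `x` is the `i`-th
node of the triplet `T`. -/
def occSet (x : Fin n) : Type := {p : Fin N × Fin 3 // tri p.1 p.2 = x}

instance (x : Fin n) : Fintype (occSet tri x) := by unfold occSet; infer_instance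
instance (x : Fin n) : DecidableEq (occSet tri x) := by unfold occSet; infer_instance

variable (enum : ∀ x : Fin n, occSet tri x ≃ Fin (Fintype.card (occSet tri x)))

/-- The cyclic successor of an occurrence of `x`, in the cyclic order given by
the enumeration `enum x`. -/
def nxtOcc (x : Fin n) (o : occSet tri x) : occSet tri x :=
  (enum x).symm ⟨((enum x o : Fin _).1 + 1) % Fintype.card (occSet tri x),
    Nat.mod_lt _ (Fintype.card_pos_iff.mpr ⟨o⟩)⟩

/-- The cyclic order `(T₁⁺, T₂⁺, T₃⁺, T₃⁻, T₂⁻, T₁⁻)` of a triplet-cycle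
(`true` = positive, `false` = negative). -/
def cyc6 : Fin 6 → Fin 3 × Bool :=
  ![(0, true), (1, true), (2, true), (2, false), (1, false), (0, false)]

/-- The capacitated graph `G(H)` associated with the 3-hypergraph `H` given by
`tri` (with a chosen cyclic enumeration `enum x` of the occurrences of each node
`x`).

Vertices: `Sum.inl (o, s)` is the positive (`s = true`) or negative
(`s = false`) terminal of the node-cycle `C(tri o.1 o.2)` associated with the
occurrence `o`; `Sum.inr ((T,i), s)` is the vertex `Tᵢ⁺` (resp. `Tᵢ⁻`) of the
triplet-cycle `C(T)`.

Edges: `Sum.inl (o, true)` joins the two terminals of the occurrence `o`, and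
`Sum.inl (o, false)` joins the negative terminal of `o` to the positive
terminal of the next occurrence of the same node, so that the node-cycle
`C(x)` passes through its positive and negative terminals alternately, and has
length twice the number of triplets containing `x`; `Sum.inr (Sum.inl (T,j))`
is the `j`-th edge of the triplet-cycle `C(T)`, in the cyclic order
`(T₁⁺, T₂⁺, T₃⁺, T₃⁻, T₂⁻, T₁⁻)`; `Sum.inr (Sum.inr (o, s))` is the connector
joining the positive (resp. negative) terminal of the occurrence `o = (T,i)`
to `Tᵢ⁺` (resp. `Tᵢ⁻`). -/
def GH : Multigraph where
  V := ((Fin N × Fin 3) × Bool) ⊕ ((Fin N × Fin 3) × Bool)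
  E := ((Fin N × Fin 3) × Bool) ⊕ ((Fin N × Fin 6) ⊕ ((Fin N × Fin 3) × Bool))
  src := fun e =>
    match e with
    | Sum.inl (o, true) => Sum.inl (o, true)
    | Sum.inl (o, false) => Sum.inl (o, false)
    | Sum.inr (Sum.inl (T, j)) => Sum.inr ((T, (cyc6 j).1), (cyc6 j).2)
    | Sum.inr (Sum.inr (o, s)) => Sum.inl (o, s)
  tgt := fun e =>
    match e with
    | Sum.inl (o, true) => Sum.inl (o, false)
    | Sum.inl (o, false) => Sum.inl ((nxtOcc tri enum (tri o.1 o.2) ⟨o, rfl⟩).1, true)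
    | Sum.inr (Sum.inl (T, j)) => Sum.inr ((T, (cyc6 (j + 1)).1), (cyc6 (j + 1)).2)
    | Sum.inr (Sum.inr (o, s)) => Sum.inr (o, s)

/-- The capacities of `G(H)`: node-cycle edges and connectors get capacity
`(1,2) ∪ (3,4)`, triplet-cycle edges get capacity `(1,4)`. -/
noncomputable def GHcap : (GH tri enum).E → Set (AddCircle (5:ℝ)) := fun e =>
  match e with
  | Sum.inl _ => openArc 5 1 2 ∪ openArc 5 3 4
  | Sum.inr (Sum.inl _) => openArc 5 1 4
  | Sum.inr (Sum.inr _) => openArc 5 1 2 ∪ openArc 5 3 4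

/-- The 3-hypergraph given by `tri` is 2-colorable: the nodes can be 2-colored
so that no triplet is monochromatic. -/
def TwoColorable : Prop :=
  ∃ c : Fin n → Bool, ∀ T : Fin N,
    (∃ i : Fin 3, c (tri T i) = true) ∧ (∃ i : Fin 3, c (tri T i) = false)

end GH

/-!
Colour every node `x` by a sign `ε = ±1` and let the node-cycle `C(x)` carry the circulation
`16/5 · ε`.  At an occurrence of `x` as the `i`-th node of `T`, the amount `7/5 · ε` leaves
`C(x)` through the connector to `Tᵢ⁺`, runs along `C(T)` and comes back through the connector
from `Tᵢ⁻`.  Node-cycle edges thus carry `±16/5` and `±9/5`, connectors `±7/5`, all in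
`(1,2) ∪ (3,4)` modulo `5`.  The edges of `C(T)` carry `g + 7/5 · s`, where `s` runs through
the partial sums of the three signs of `T`; as `T` is not monochromatic these partial sums stay
within `1` of their mean, so choosing `g` to centre them at `5/2` keeps every value in `(1,4)`.
-/

theorem openArc_eq_image_Ioo {r a b : ℝ} (hab : a < b) (hba : b ≤ a + r) :
    openArc r a b = (↑) '' Set.Ioo a b := by
  have hr : 0 < r := by linarith
  have hfloor : ⌊(a - b) / r⌋ = -1 := by
    rw [Int.floor_eq_iff]
    constructor
    · rw [le_div_iff₀ hr]; push_cast; linarith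
    · rw [div_lt_iff₀ hr]; push_cast; linarith
  rw [openArc, Int.fract, hfloor]
  congr 2
  field_simp
  ring

theorem coe_mem_openArc {r a b t : ℝ} (hab : a < b) (hba : b ≤ a + r) (ht : t ∈ Set.Ioo a b) :
    (t : AddCircle r) ∈ openArc r a b :=
  openArc_eq_image_Ioo hab hba ▸ Set.mem_image_of_mem _ ht

theorem coe_mul_mem_openArc_union {ε x : ℝ} (hε : |ε| = 1) (hx : x ∈ Set.Ioo 1 2 ∪ Set.Ioo 3 4) :
    ((ε * x : ℝ) : AddCircle (5 : ℝ)) ∈ openArc 5 1 2 ∪ openArc 5 3 4 := by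
  have hcoe : ∀ t ∈ Set.Ioo (1 : ℝ) 2 ∪ Set.Ioo 3 4, (t : AddCircle (5 : ℝ)) ∈ openArc 5 1 2 ∪ openArc 5 3 4
    | t, .inl ht => .inl (coe_mem_openArc (by norm_num) (by norm_num) ht)
    | t, .inr ht => .inr (coe_mem_openArc (by norm_num) (by norm_num) ht)
  rcases (abs_eq zero_le_one).mp hε with rfl | rfl
  · simpa using hcoe x hx
  · rw [neg_one_mul, ← AddCircle.coe_add_period]
    apply hcoe
    rcases hx with ⟨h1, h2⟩ | ⟨h1, h2⟩
    · exact .inr ⟨by linarith, by linarith⟩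
    · exact .inl ⟨by linarith, by linarith⟩

theorem Multigraph.IsFlow.map_s16 {G : Multigraph} {M M' : Type*} [AddCommMonoid M]
    [AddCommMonoid M'] {f : G.E → M} (hf : G.IsFlow f) (φ : M →+ M') :
    G.IsFlow (fun e => φ (f e)) := by
  intro v
  simp only [← map_sum, hf v]

theorem Function.Injective.sum_ite_apply_eq {α M : Type*} [Fintype α] [DecidableEq α]
    [AddCommMonoid M] {g : α → α} (hg : g.Injective) {F : α → M} (hF : ∀ x, F (g x) = F x)
    (y : α) : ∑ x, (if g x = y then F x else 0) = F y := by
  calc ∑ x, (if g x = y then F x else 0) = ∑ x, (if g x = y then F (g x) else 0) := by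
        simp only [hF]
    _ = ∑ x, (if x = y then F x else 0) :=
        (Equiv.ofBijective g hg.bijective_of_finite).sum_comp (fun x => if x = y then F x else 0)
    _ = F y := by simp

theorem Fintype.sum_prod_bool {α M : Type*} [Fintype α] [AddCommMonoid M] (f : α × Bool → M) :
    ∑ x, f x = ∑ a, (f (a, true) + f (a, false)) := by
  simp [Fintype.sum_prod_type]

def colorSign : Bool → ℝ
  | true => 1
  | false => -1

theorem abs_colorSign (b : Bool) : |colorSign b| = 1 := by
  cases b <;> simp [colorSign]

def tripletOffset (w : Fin 3 → ℝ) : Fin 6 → ℝ :=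
  ![w 0, w 0 + w 1, w 0 + w 1 + w 2, w 0 + w 1, w 0, 0]

/-- The mean of the four partial sums `0, w₀, w₀ + w₁, w₀ + w₁ + w₂`. -/
noncomputable def tripletMean (w : Fin 3 → ℝ) : ℝ := (3 * w 0 + 2 * w 1 + w 2) / 4

theorem abs_tripletOffset_sub_tripletMean_le (b : Fin 3 → Bool) (hT : ∃ i, b i = true)
    (hF : ∃ i, b i = false) (j : Fin 6) :
    |tripletOffset (colorSign ∘ b) j - tripletMean (colorSign ∘ b)| ≤ 1 := by
  obtain ⟨i, hi⟩ := hT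
  obtain ⟨i', hi'⟩ := hF
  simp only [tripletOffset, tripletMean, Function.comp_apply]
  cases h0 : b 0 <;> cases h1 : b 1 <;> cases h2 : b 2 <;>
    fin_cases i <;> fin_cases i' <;> simp_all <;>
    fin_cases j <;> norm_num [colorSign, abs_le]

section GH

variable {n N : ℕ} (tri : Fin N → Fin 3 → Fin n)
  (enum : ∀ x : Fin n, occSet tri x ≃ Fin (Fintype.card (occSet tri x)))

theorem nxtOcc_injective (x : Fin n) : Function.Injective (nxtOcc tri enum x) := fun a b h =>
  have hmod : (enum x a : ℕ) + 1 ≡ (enum x b : ℕ) + 1 [MOD Fintype.card (occSet tri x)] :=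
    congrArg Fin.val ((enum x).symm.injective h)
  (enum x).injective <| Fin.ext <|
    (Nat.ModEq.add_right_cancel' 1 hmod).eq_of_lt_of_lt (enum x a).2 (enum x b).2

def nextOcc (o : Fin N × Fin 3) : Fin N × Fin 3 :=
  (nxtOcc tri enum (tri o.1 o.2) ⟨o, rfl⟩).1

theorem val_nxtOcc (o : Fin N × Fin 3) :
    (nxtOcc tri enum (tri o.1 o.2) ⟨o, rfl⟩).1 = nextOcc tri enum o := rfl

theorem tri_nextOcc (o : Fin N × Fin 3) :
    tri (nextOcc tri enum o).1 (nextOcc tri enum o).2 = tri o.1 o.2 :=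
  (nxtOcc tri enum _ ⟨o, rfl⟩).2

theorem nextOcc_injective : Function.Injective (nextOcc tri enum) :=
  let sigmaOcc := Equiv.sigmaFiberEquiv (fun o : Fin N × Fin 3 => tri o.1 o.2)
  sigmaOcc.injective.comp
    ((Function.injective_id.sigma_map (nxtOcc_injective tri enum)).comp sigmaOcc.symm.injective)

theorem sum_GH_edges {M : Type*} [AddCommMonoid M] (F : (GH tri enum).E → M) :
    ∑ e, F e = ∑ o, (F (.inl (o, true)) + F (.inl (o, false))) + ∑ t, F (.inr (.inl t)) +
      ∑ o, (F (.inr (.inr (o, true))) + F (.inr (.inr (o, false)))) := by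
  rw [add_assoc]
  exact (Fintype.sum_sum_type F).trans (by simp only [Fintype.sum_sum_type, Fintype.sum_prod_bool])

variable (c : Fin n → Bool)

noncomputable def colorFlow : (GH tri enum).E → ℝ
  | .inl (o, true) => colorSign (c (tri o.1 o.2)) * (9 / 5)
  | .inl (o, false) => colorSign (c (tri o.1 o.2)) * (16 / 5)
  | .inr (.inl (T, j)) =>
      5 / 2 + 7 / 5 * (tripletOffset (colorSign ∘ c ∘ tri T) j - tripletMean (colorSign ∘ c ∘ tri T))
  | .inr (.inr (o, true)) => colorSign (c (tri o.1 o.2)) * (7 / 5)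
  | .inr (.inr (o, false)) => -colorSign (c (tri o.1 o.2)) * (7 / 5)

theorem colorFlow_isFlow : (GH tri enum).IsFlow (colorFlow tri enum c) := by
  intro v
  simp only [Finset.sum_filter, sum_GH_edges]
  rcases v with ⟨o, _ | _⟩ | ⟨⟨T, i⟩, s⟩
  · simp only [GH, Sum.inl.injEq, Prod.mk.injEq, Bool.true_eq_false, and_true, and_false,
      reduceCtorEq, ↓reduceIte, sum_ite_eq', mem_univ, sum_const_zero, add_zero, zero_add]
    simp only [colorFlow]
    ring
  · simp only [GH, val_nxtOcc, Sum.inl.injEq, Prod.mk.injEq, Bool.false_eq_true, and_true,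
      and_false, reduceCtorEq, ↓reduceIte, sum_ite_eq', mem_univ, sum_const_zero, add_zero, zero_add]
    rw [(nextOcc_injective tri enum).sum_ite_apply_eq (fun o => by simp only [colorFlow, tri_nextOcc])]
    simp only [colorFlow]
    ring
  · simp only [GH, Sum.inr.injEq, Prod.mk.injEq, reduceCtorEq, ↓reduceIte, sum_const_zero,
      add_zero, zero_add, Bool.true_eq, Bool.false_eq]
    rw [Fintype.sum_prod_type, Fintype.sum_prod_type]
    fin_cases i <;> cases s <;>
      simp only [cyc6, Fin.isValue, Fin.zero_eta, Fin.mk_one, Fin.reduceFinMk, Fin.reduceAdd,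
        Fin.reduceEq, Fin.sum_univ_six, Matrix.cons_val_zero, Matrix.cons_val_one, Matrix.cons_val,
        zero_ne_one, one_ne_zero, Bool.true_eq_false, Bool.false_eq_true, and_true, and_false,
        and_self, ↓reduceIte, add_zero, zero_add, sum_ite_eq', mem_univ] <;>
      simp only [colorFlow, tripletOffset, Function.comp_apply, Matrix.cons_val_zero,
        Matrix.cons_val_one, Matrix.cons_val] <;>
      ring

theorem colorFlow_mem_GHcap
    (hc : ∀ T, (∃ i, c (tri T i) = true) ∧ (∃ i, c (tri T i) = false)) (e : (GH tri enum).E) :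
    (colorFlow tri enum c e : AddCircle (5 : ℝ)) ∈ GHcap tri enum e := by
  rcases e with ⟨o, _ | _⟩ | ⟨T, j⟩ | ⟨o, _ | _⟩
  · exact coe_mul_mem_openArc_union (abs_colorSign _) (by norm_num)
  · exact coe_mul_mem_openArc_union (abs_colorSign _) (by norm_num)
  · have hd := abs_le.mp (abs_tripletOffset_sub_tripletMean_le (c ∘ tri T) (hc T).1 (hc T).2 j)
    exact coe_mem_openArc (by norm_num) (by norm_num) ⟨by dsimp only [colorFlow]; linarith,
      by dsimp only [colorFlow]; linarith⟩
  · exact coe_mul_mem_openArc_union (by rw [abs_neg, abs_colorSign]) (by norm_num)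
  · exact coe_mul_mem_openArc_union (abs_colorSign _) (by norm_num)

end GH

theorem twoColorable_implies_flow_general {n N : ℕ} (tri : Fin N → Fin 3 → Fin n)
    (enum : ∀ x : Fin n, occSet tri x ≃ Fin (Fintype.card (occSet tri x))) :
    TwoColorable tri → HasCapFlow 5 (GH tri enum) (GHcap tri enum) := by
  rintro ⟨c, hc⟩
  refine ⟨1, fun e => (colorFlow tri enum c e : AddCircle (5 : ℝ)), ?_, colorFlow_mem_GHcap tri enum c hc⟩
  simpa [Multigraph.IsFlowOn] using (colorFlow_isFlow tri enum c).map_s16 (QuotientAddGroup.mk' _)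

/-- If the 3-hypergraph `H` (with node set `Fin n`, triplets
indexed by `Fin N` via `tri`, each triplet consisting of three distinct nodes)
is 2-colorable, then the capacitated graph `G(H)` admits a sub-5-MCNZF. -/
theorem twoColorable_implies_flow {n N : ℕ} (tri : Fin N → Fin 3 → Fin n)
    (htri : ∀ T : Fin N, Function.Injective (tri T))
    (enum : ∀ x : Fin n, occSet tri x ≃ Fin (Fintype.card (occSet tri x))) :
    TwoColorable tri → HasCapFlow 5 (GH tri enum) (GHcap tri enum) :=
  twoColorable_implies_flow_general tri enum
end
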